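/- Let w ∈ D_{H,J} and let w_H ∈ W_H satisfy w_H(Δ_{M′(w)}) ⊆ R⁺. Then R_H⁺ ∩ w_H(w(R_J)) = w_H(R_{M′(w)} ∩ R⁺); equivalently, w_H⁻¹(R_H⁺) ∩ w(R_J) = R_{M′(w)} ∩ R⁺. -/

import Mathlib

noncomputable section

open scoped RealInnerProductSpace

variable (V : Type*) [NormedAddCommGroup V] [InnerProductSpace ℝ V] [FiniteDimensional ℝ V]

/-- The reflection in the hyperplane orthogonal to `α`. -/
def rsRefl (α : V) : V ≃ₗᵢ[ℝ] V := Submodule.reflection (ℝ ∙ α)ᗮ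

variable {V}

/-- The subgroup of `O(V)` generated by the reflections in the elements of `RS`. -/
def weylGroupOf (RS : Set V) : Subgroup (V ≃ₗᵢ[ℝ] V) := Subgroup.closure (rsRefl V '' RS)

variable (V)

/-- Data of a finite (possibly non-reduced) root system in `V` together with a positive
system cut out by a linear functional. -/
structure RootSystemData where
  R : Set V
  finR : R.Finite
  zero_notMem : (0 : V) ∉ R
  posFun : V →ₗ[ℝ] ℝ
  posFun_ne : ∀ α ∈ R, posFun α ≠ 0
  reflect_mem : ∀ α ∈ R, ∀ β ∈ R, rsRefl V α β ∈ R

namespace RootSystemData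

variable {V}
variable (S : RootSystemData V)

/-- The positive roots `R⁺`. -/
def pos : Set V := {α ∈ S.R | 0 < S.posFun α}

/-- The negative roots `R⁻ = −R⁺`. -/
def neg : Set V := {α | -α ∈ S.pos}

/-- The simple roots of the positive system `RS ∩ R⁺` of a subsystem `RS`, i.e. its
indecomposable elements. -/
def simpleOf (RS : Set V) : Set V :=
  {α ∈ RS ∩ S.pos | ¬ ∃ β ∈ RS ∩ S.pos, ∃ γ ∈ RS ∩ S.pos, α = β + γ}

/-- The set `Δ` of simple roots of `R⁺`. -/
def simple : Set V := S.simpleOf S.R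

/-- The Weyl group `W`. -/
def W : Subgroup (V ≃ₗᵢ[ℝ] V) := weylGroupOf S.R

/-- `D_H := {w ∈ W : w⁻¹(Δ_H) ⊆ R⁺}`. -/
def DH (RH : Set V) : Set (V ≃ₗᵢ[ℝ] V) :=
  {w | w ∈ S.W ∧ ∀ α ∈ S.simpleOf RH, w⁻¹ α ∈ S.pos}

/-- The standard parabolic subsystem `R_J := R ∩ span J`. -/
def RJ (J : Set V) : Set V := S.R ∩ (Submodule.span ℝ J : Set V)

/-- `D_J := {w ∈ W : w⁻¹(J) ⊆ R⁺}`. -/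
def DJ (J : Set V) : Set (V ≃ₗᵢ[ℝ] V) := {w | w ∈ S.W ∧ ∀ α ∈ J, w⁻¹ α ∈ S.pos}

/-- `D_{H,J} := {w ∈ W : w(J) ⊆ R⁺ and w⁻¹(Δ_H) ⊆ R⁺}`. -/
def DHJ (RH J : Set V) : Set (V ≃ₗᵢ[ℝ] V) :=
  {w | w ∈ S.W ∧ (∀ α ∈ J, w α ∈ S.pos) ∧ ∀ α ∈ S.simpleOf RH, w⁻¹ α ∈ S.pos}

/-- The subsystem `R_{M′(w)} := R_H ∩ w(R_J)`. -/
def RMprime (RH J : Set V) (w : V ≃ₗᵢ[ℝ] V) : Set V := RH ∩ (⇑w '' S.RJ J)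

/-- `D_{M′(w)} := {x ∈ W : x⁻¹(Δ_{M′(w)}) ⊆ R⁺}`. -/
def DMprime (RH J : Set V) (w : V ≃ₗᵢ[ℝ] V) : Set (V ≃ₗᵢ[ℝ] V) :=
  {x | x ∈ S.W ∧ ∀ α ∈ S.simpleOf (S.RMprime RH J w), x⁻¹ α ∈ S.pos}

/-- `l_H(x) := #{α ∈ R_H⁺ : x(α) ∈ R⁻}`. -/
def lH (RH : Set V) (x : V ≃ₗᵢ[ℝ] V) : ℕ :=
  Set.ncard {α | α ∈ RH ∩ S.pos ∧ x α ∈ S.neg}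

end RootSystemData

/-- `a_J := {v ∈ V : ⟨α, v⟩ = 0 for all α ∈ J}`. -/
def aJset {V : Type*} [NormedAddCommGroup V] [InnerProductSpace ℝ V] (J : Set V) : Set V :=
  {v | ∀ α ∈ J, ⟪α, v⟫ = (0 : ℝ)}

/-! Since `R⁺` is cut out by a linear form, a positive root of `R_{M′(w)}` that is not simple
splits into two positive roots of smaller height; by induction on height, `w_H` therefore maps all
of `R_{M′(w)} ∩ R⁺` into `R⁺`, and into `R_H` since `W_H` permutes `R_H`. Conversely, as
`R_{M′(w)}` is stable under negation, a root `β` of it with `w_H β ∈ R⁺` cannot be negative,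
for then `w_H(-β)` would be positive too. -/

section WeylGroup

variable {V : Type*} [NormedAddCommGroup V] [InnerProductSpace ℝ V]

lemma rsRefl_apply_self (α : V) : rsRefl V α α = -α :=
  Submodule.reflection_orthogonalComplement_singleton_eq_neg α

lemma rsRefl_rsRefl (α x : V) : rsRefl V α (rsRefl V α x) = x :=
  Submodule.reflection_reflection _ x

lemma neg_mem_of_rsRefl_mem {RS : Set V} (hcl : ∀ α ∈ RS, ∀ β ∈ RS, rsRefl V α β ∈ RS)
    {α : V} (hα : α ∈ RS) : -α ∈ RS :=
  rsRefl_apply_self α ▸ hcl α hα α hα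

lemma apply_mem_iff_of_mem_weylGroupOf {RS : Set V}
    (hcl : ∀ α ∈ RS, ∀ β ∈ RS, rsRefl V α β ∈ RS) {g : V ≃ₗᵢ[ℝ] V}
    (hg : g ∈ weylGroupOf RS) (x : V) : g x ∈ RS ↔ x ∈ RS := by
  induction hg using Subgroup.closure_induction generalizing x with
  | mem g hg =>
    obtain ⟨α, hα, rfl⟩ := hg
    exact ⟨fun hx => rsRefl_rsRefl α x ▸ hcl α hα _ hx, hcl α hα x⟩
  | one => rfl
  | mul g h _ _ ihg ihh => exact (ihg (h x)).trans (ihh x)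
  | inv g _ ih => simpa using (ih (g⁻¹ x)).symm

end WeylGroup

namespace RootSystemData

variable {V : Type*} [NormedAddCommGroup V] [InnerProductSpace ℝ V]
variable (S : RootSystemData V)

lemma pos_of_pos_on_simpleOf {T : Set V} (hT : (T ∩ S.pos).Finite) {f : V →ₗ[ℝ] ℝ}
    (hf : ∀ δ ∈ S.simpleOf T, 0 < f δ) : ∀ α ∈ T ∩ S.pos, 0 < f α := by
  by_contra! hbad
  obtain ⟨α, ⟨hα, hfα⟩, hmin⟩ := Set.exists_min_image {α | α ∈ T ∩ S.pos ∧ f α ≤ 0} S.posFun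
    (hT.subset fun _ h => h.1) hbad
  have hdec : ∃ β ∈ T ∩ S.pos, ∃ γ ∈ T ∩ S.pos, α = β + γ := by
    by_contra hndec
    exact (hf α ⟨hα, hndec⟩).not_ge hfα
  obtain ⟨β, hβ, γ, hγ, rfl⟩ := hdec
  have hlower : ∀ δ ∈ T ∩ S.pos, S.posFun δ < S.posFun (β + γ) → 0 < f δ := fun δ hδ hlt =>
    not_le.mp fun hfδ => (hmin δ ⟨hδ, hfδ⟩).not_gt hlt
  have hβγ : 0 < S.posFun β ∧ 0 < S.posFun γ := ⟨hβ.2.2, hγ.2.2⟩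
  have hfβ := hlower β hβ (by simp only [map_add]; linarith)
  have hfγ := hlower γ hγ (by simp only [map_add]; linarith)
  simp only [map_add] at hfα
  linarith

lemma pos_iff_mem_pos_of_pos_on_pos {M : Set V} (hMR : M ⊆ S.R) (hneg : ∀ β ∈ M, -β ∈ M)
    {f : V →ₗ[ℝ] ℝ} (hf : ∀ α ∈ M ∩ S.pos, 0 < f α) {β : V} (hβ : β ∈ M) :
    0 < f β ↔ β ∈ S.pos := by
  refine ⟨fun hfβ => ?_, fun hβpos => hf β ⟨hβ, hβpos⟩⟩
  by_contra hβpos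
  have hlt : S.posFun β < 0 :=
    (S.posFun_ne β (hMR hβ)).lt_of_le (not_lt.mp fun h => hβpos ⟨hMR hβ, h⟩)
  have hfneg := hf (-β) ⟨hneg β hβ, hMR (hneg β hβ), by rw [map_neg]; linarith⟩
  rw [map_neg] at hfneg
  linarith

lemma neg_mem_RJ {J : Set V} {β : V} (hβ : β ∈ S.RJ J) : -β ∈ S.RJ J :=
  ⟨neg_mem_of_rsRefl_mem S.reflect_mem hβ.1, Submodule.neg_mem _ hβ.2⟩

lemma neg_mem_RMprime {RH J : Set V} (hRHrefl : ∀ α ∈ RH, ∀ β ∈ RH, rsRefl V α β ∈ RH)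
    (w : V ≃ₗᵢ[ℝ] V) {β : V} (hβ : β ∈ S.RMprime RH J w) : -β ∈ S.RMprime RH J w := by
  obtain ⟨hβH, γ, hγ, rfl⟩ := hβ
  exact ⟨neg_mem_of_rsRefl_mem hRHrefl hβH, -γ, S.neg_mem_RJ hγ, map_neg w γ⟩

end RootSystemData

theorem statement9_general
    (V : Type*) [NormedAddCommGroup V] [InnerProductSpace ℝ V]
    (S : RootSystemData V) (RH : Set V)
    (hRHsub : RH ⊆ S.R) (hRHrefl : ∀ α ∈ RH, ∀ β ∈ RH, rsRefl V α β ∈ RH)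
    (J : Set V)
    (w wH : V ≃ₗᵢ[ℝ] V) (hwH : wH ∈ weylGroupOf RH)
    (hsim : ∀ α ∈ S.simpleOf (S.RMprime RH J w), wH α ∈ S.pos) :
    (RH ∩ S.pos) ∩ (⇑wH '' (⇑w '' S.RJ J)) = ⇑wH '' (S.RMprime RH J w ∩ S.pos) ∧
    (⇑wH⁻¹ '' (RH ∩ S.pos)) ∩ (⇑w '' S.RJ J) = S.RMprime RH J w ∩ S.pos := by
  set M := S.RMprime RH J w
  have hMR : M ⊆ S.R := fun β hβ => hRHsub hβ.1
  have hMneg : ∀ β ∈ M, -β ∈ M := fun β => S.neg_mem_RMprime hRHrefl w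
  have hwHpos : ∀ α ∈ M ∩ S.pos, 0 < (S.posFun ∘ₗ wH.toLinearEquiv.toLinearMap) α :=
    S.pos_of_pos_on_simpleOf (S.finR.subset fun _ h => hMR h.1) fun δ hδ => (hsim δ hδ).2
  have hwHRH := apply_mem_iff_of_mem_weylGroupOf hRHrefl hwH
  have hinv : ⇑wH⁻¹ '' (RH ∩ S.pos) = wH ⁻¹' (RH ∩ S.pos) := by
    rw [LinearIsometryEquiv.coe_inv, wH.symm.image_eq_preimage_symm, wH.symm_symm]
  have hsecond : ⇑wH⁻¹ '' (RH ∩ S.pos) ∩ ⇑w '' S.RJ J = M ∩ S.pos := by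
    rw [hinv]
    ext β
    constructor
    · rintro ⟨⟨hH, hpos⟩, hJ⟩
      have hβM : β ∈ M := ⟨(hwHRH β).1 hH, hJ⟩
      exact ⟨hβM, (S.pos_iff_mem_pos_of_pos_on_pos hMR hMneg hwHpos hβM).1 hpos.2⟩
    · rintro ⟨hβM, hβpos⟩
      exact ⟨⟨(hwHRH β).2 hβM.1, hRHsub ((hwHRH β).2 hβM.1), hwHpos β ⟨hβM, hβpos⟩⟩, hβM.2⟩
  refine ⟨?_, hsecond⟩
  rw [← hsecond, hinv, Set.image_preimage_inter]

/-- for `w ∈ D_{H,J}` and `w_H ∈ W_H` with `w_H(Δ_{M′(w)}) ⊆ R⁺`,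
`R_H⁺ ∩ w_H(w(R_J)) = w_H(R_{M′(w)} ∩ R⁺)`, equivalently
`w_H⁻¹(R_H⁺) ∩ w(R_J) = R_{M′(w)} ∩ R⁺`. -/
theorem statement9
    (V : Type*) [NormedAddCommGroup V] [InnerProductSpace ℝ V] [FiniteDimensional ℝ V]
    (S : RootSystemData V) (RH : Set V)
    (hRHsub : RH ⊆ S.R) (hRHrefl : ∀ α ∈ RH, ∀ β ∈ RH, rsRefl V α β ∈ RH)
    (J : Set V) (hJ : J ⊆ S.simple)
    (w wH : V ≃ₗᵢ[ℝ] V) (hw : w ∈ S.DHJ RH J) (hwH : wH ∈ weylGroupOf RH)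
    (hsim : ∀ α ∈ S.simpleOf (S.RMprime RH J w), wH α ∈ S.pos) :
    (RH ∩ S.pos) ∩ (⇑wH '' (⇑w '' S.RJ J)) = ⇑wH '' (S.RMprime RH J w ∩ S.pos) ∧
    (⇑wH⁻¹ '' (RH ∩ S.pos)) ∩ (⇑w '' S.RJ J) = S.RMprime RH J w ∩ S.pos :=
  statement9_general V S RH hRHsub hRHrefl J w wH hwH hsim
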